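/- arXiv:1901.10348 — 7 statements merged into one kernel-verified Lean document; each statement's English description precedes it below -/
import Mathlib

section
/- Let g: R^d → R ∪ {+∞} be proper convex lower semicontinuous, β > 0, and let g_β(z) = max_y (⟨z,y⟩ - g*(y) - (β/2)‖y‖²) with maximizer y*_β(z). Then for all z₁, z₂ ∈ R^d: g(z₁) ≥ g_β(z₂) + ⟨∇g_β(z₂), z₁ - z₂⟩ + (β/2)‖y*_β(z₂)‖². -/
open RealInnerProductSpace

/-- Fenchel conjugate of an extended-real-valued function on Euclidean space. -/
noncomputable def fenchelConj {d : ℕ} (g : EuclideanSpace ℝ (Fin d) → EReal)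
    (y : EuclideanSpace ℝ (Fin d)) : EReal :=
  ⨆ v, ((⟪y, v⟫ : ℝ) : EReal) - g v

/-- Moreau–Nesterov smoothing `g_β(z) = sup_y ⟨z,y⟩ - g*(y) - (β/2)‖y‖²`. -/
noncomputable def moreauE {d : ℕ} (g : EuclideanSpace ℝ (Fin d) → EReal) (β : ℝ)
    (z : EuclideanSpace ℝ (Fin d)) : EReal :=
  ⨆ y, ((⟪z, y⟫ : ℝ) : EReal) - fenchelConj g y - ((β / 2 * ‖y‖ ^ 2 : ℝ) : EReal)

/-- `g(z₁) ≥ g_β(z₂) + ⟨∇g_β(z₂), z₁ - z₂⟩ + (β/2)‖y*_β(z₂)‖²`, where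
`∇g_β(z₂) = y*_β(z₂)` is the maximizer defining the smoothing. -/
theorem moreau_strengthened_lower_bound {d : ℕ} (g : EuclideanSpace ℝ (Fin d) → EReal)
    (β : ℝ) (hβ : 0 < β)
    (hproper : ∃ v, g v ≠ ⊤) (hnbot : ∀ v, g v ≠ ⊥)
    (hconv : ∀ x y : EuclideanSpace ℝ (Fin d), ∀ a b : ℝ, 0 ≤ a → 0 ≤ b → a + b = 1 →
      g (a • x + b • y) ≤ (a : EReal) * g x + (b : EReal) * g y)
    (hlsc : LowerSemicontinuous g)
    (ystar : EuclideanSpace ℝ (Fin d) → EuclideanSpace ℝ (Fin d))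
    (hystar : ∀ z, IsMaxOn
      (fun y => ((⟪z, y⟫ : ℝ) : EReal) - fenchelConj g y - ((β / 2 * ‖y‖ ^ 2 : ℝ) : EReal))
      Set.univ (ystar z)) :
    ∀ z₁ z₂ : EuclideanSpace ℝ (Fin d),
      moreauE g β z₂ + ((⟪ystar z₂, z₁ - z₂⟫ + β / 2 * ‖ystar z₂‖ ^ 2 : ℝ) : EReal)
        ≤ g z₁ := by
  intro z₁ z₂
  set y := ystar z₂ with hy
  have hM : moreauE g β z₂
      = ((⟪z₂, y⟫ : ℝ) : EReal) - fenchelConj g y - ((β / 2 * ‖y‖ ^ 2 : ℝ) : EReal) := by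
    unfold moreauE
    exact le_antisymm (iSup_le fun w => hystar z₂ (Set.mem_univ w))
      (le_iSup (fun w : EuclideanSpace ℝ (Fin d) =>
        ((⟪z₂, w⟫ : ℝ) : EReal) - fenchelConj g w - ((β / 2 * ‖w‖ ^ 2 : ℝ) : EReal)) y)
  rw [hM]
  have hFY : ((⟪y, z₁⟫ : ℝ) : EReal) - g z₁ ≤ fenchelConj g y := by
    unfold fenchelConj
    exact le_iSup (fun w => ((⟪y, w⟫ : ℝ) : EReal) - g w) z₁
  rcases eq_or_ne (fenchelConj g y) ⊤ with hT | hT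
  · rw [hT]
    simp
  · obtain ⟨v, hv⟩ := hproper
    obtain ⟨r, hr⟩ : ∃ r : ℝ, g v = (r : EReal) := by
      lift g v to ℝ using ⟨hv, hnbot v⟩ with r
      exact ⟨r, rfl⟩
    have hB : fenchelConj g y ≠ ⊥ := by
      have hle : ((⟪y, v⟫ - r : ℝ) : EReal) ≤ fenchelConj g y := by
        unfold fenchelConj
        have := le_iSup (fun w => ((⟪y, w⟫ : ℝ) : EReal) - g w) v
        rwa [hr, ← EReal.coe_sub] at this
      intro h
      rw [h] at hle
      exact (EReal.bot_lt_coe _).not_ge hle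
    lift fenchelConj g y to ℝ using ⟨hT, hB⟩ with c hc
    rw [← EReal.coe_sub, ← EReal.coe_sub, ← EReal.coe_add]
    have hkey : (⟪z₂, y⟫ - c - β / 2 * ‖y‖ ^ 2 + (⟪y, z₁ - z₂⟫ + β / 2 * ‖y‖ ^ 2) : ℝ)
        = ⟪y, z₁⟫ - c := by
      rw [inner_sub_right, real_inner_comm y z₂]
      ring
    rw [hkey]
    rcases eq_or_ne (g z₁) ⊤ with h1 | h1
    · rw [h1]; exact le_top
    · obtain ⟨s, hs⟩ : ∃ s : ℝ, g z₁ = (s : EReal) := by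
        lift g z₁ to ℝ using ⟨h1, hnbot z₁⟩ with s
        exact ⟨s, rfl⟩
      rw [hs]
      rw [hs, ← EReal.coe_sub, EReal.coe_le_coe_iff] at hFY
      exact EReal.coe_le_coe_iff.mpr (by linarith)
end

section
/- Define η_k = 9/(k+8) and β_k = β₀/√(k+8) for k ≥ 1 with β₀ > 0. Then for all k ≥ 2: (1 - η_k)(β_{k-1} - β_k) - η_k β_k < 0. -/
/-- The coupled step-size / smoothing parameter inequality for SHCGM. -/
theorem shcgm_parameter_inequality (β₀ : ℝ) (hβ₀ : 0 < β₀)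
    (η β : ℕ → ℝ)
    (hη : ∀ k : ℕ, 1 ≤ k → η k = 9 / ((k : ℝ) + 8))
    (hβ : ∀ k : ℕ, 1 ≤ k → β k = β₀ / Real.sqrt ((k : ℝ) + 8)) :
    ∀ k : ℕ, 2 ≤ k → (1 - η k) * (β (k - 1) - β k) - η k * β k < 0 := by
  intro k hk
  have hk1 : 1 ≤ k := le_trans (by norm_num) hk
  have hkm : 1 ≤ k - 1 := Nat.le_sub_one_of_lt hk
  rw [hη k hk1, hβ k hk1, hβ (k - 1) hkm]
  have hcast : ((k - 1 : ℕ) : ℝ) = (k : ℝ) - 1 := by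
    push_cast [Nat.cast_sub hk1]; ring
  rw [hcast]
  have hx : (10 : ℝ) ≤ (k : ℝ) + 8 := by
    have : (2 : ℝ) ≤ (k : ℝ) := by exact_mod_cast hk
    linarith
  set x : ℝ := (k : ℝ) + 8 with hxdef
  have hx1 : (k : ℝ) - 1 + 8 = x - 1 := by rw [hxdef]; ring
  rw [hx1]
  have hs : 0 < Real.sqrt (x - 1) := Real.sqrt_pos.mpr (by linarith)
  have ht : 0 < Real.sqrt x := Real.sqrt_pos.mpr (by linarith)
  set s := Real.sqrt (x - 1)
  set t := Real.sqrt x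
  have hs2 : s ^ 2 = x - 1 := Real.sq_sqrt (by linarith)
  have ht2 : t ^ 2 = x := Real.sq_sqrt (by linarith)
  have hst : s < t := by
    have := Real.sqrt_lt_sqrt (by linarith : (0:ℝ) ≤ x - 1) (by linarith : x - 1 < x)
    simpa using this
  have hx0 : (0 : ℝ) < x := by linarith
  rw [sub_neg, div_sub_div _ _ (ne_of_gt hs) (ne_of_gt ht)]
  have h19 : 1 - 9 / x = (x - 9) / x := by field_simp
  rw [h19, div_mul_div_comm, div_mul_div_comm, div_lt_div_iff₀ (mul_pos hx0 (mul_pos hs ht)) (mul_pos hx0 ht)]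
  have h1 : (t - s) * (t + s) = 1 := by nlinarith
  have hkey : (x - 9) * (t - s) < 9 * s := by
    nlinarith [mul_pos hs ht, mul_pos (add_pos ht hs) hs, h1, hst, hx,
      mul_pos (sub_pos.mpr hst) (add_pos ht hs)]
  have hpos : 0 < β₀ * (x * t) := by positivity
  calc (x - 9) * (β₀ * t - s * β₀) * (x * t) = (β₀ * (x * t)) * ((x - 9) * (t - s)) := by ring
    _ < (β₀ * (x * t)) * (9 * s) := by exact mul_lt_mul_of_pos_left hkey hpos
    _ = 9 * β₀ * (x * (s * t)) := by ring
end

section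
/- Let (E_k)_{k≥1} be a sequence of reals satisfying E_{k+1} ≤ (1 - 9/(k+8)) E_k + C/(k+8)^{4/3} for all k ≥ 1, where C ≥ 0 and E_1 is arbitrary. Then for all k ≥ 1: E_{k+1} ≤ 9^{1/3} C / (k+8)^{1/3}. -/
/-!
With `t = k + 8`, the bound `E_{k+1} ≤ A C / t ^ (1/3)` is carried from `t` to `t + 1` by the
recursion for every `A ≥ 1`: after clearing denominators this is Bernoulli's inequality
`(1 + 1/t) ^ (1/3) ≤ 1 + 1/(3t)`, with room to spare. The induction starts at `k = 1`, where the
contraction factor `1 - 9/9` vanishes and `E_1` drops out.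
-/

theorem Real.add_one_rpow_le {t p : ℝ} (ht : 0 < t) (hp₀ : 0 ≤ p) (hp₁ : p ≤ 1) :
    (t + 1) ^ p ≤ t ^ p * (1 + p / t) := by
  have hs : -1 ≤ 1 / t := by linarith [one_div_pos.2 ht]
  calc (t + 1) ^ p = t ^ p * (1 + 1 / t) ^ p := by
        rw [← Real.mul_rpow ht.le (by linarith), mul_one_add, mul_one_div_cancel ht.ne']
    _ ≤ t ^ p * (1 + p * (1 / t)) := by
        gcongr; exact rpow_one_add_le_one_add_mul_self hs hp₀ hp₁
    _ = t ^ p * (1 + p / t) := by rw [mul_one_div]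

theorem le_div_rpow_succ_of_recursion {t p A C e e' : ℝ} (ht : 8 ≤ t) (hp₀ : 0 ≤ p)
    (hp₁ : p ≤ 1) (hA : 1 ≤ A) (hC : 0 ≤ C) (he : e ≤ A * C / t ^ p)
    (hrec : e' ≤ (1 - 9 / (t + 1)) * e + C / (t + 1) ^ (1 + p)) :
    e' ≤ A * C / (t + 1) ^ p := by
  have ht₀ : 0 < t := by linarith
  set u := t ^ p
  set v := (t + 1) ^ p
  have hu₀ : 0 < u := Real.rpow_pos_of_pos ht₀ p
  have hv₀ : 0 < v := Real.rpow_pos_of_pos (by linarith) p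
  have hvu : v ≤ u * (1 + p / t) := Real.add_one_rpow_le ht₀ hp₀ hp₁
  have hcoeff : 0 ≤ 1 - 9 / (t + 1) := by
    rw [sub_nonneg, div_le_one (by linarith)]; linarith
  have hpt : (t - 8) * (p / t) ≤ p := by
    rw [mul_div_assoc', div_le_iff₀ ht₀]; nlinarith
  have key : (t - 8) * A * v + u ≤ A * (t + 1) * u := by
    calc (t - 8) * A * v + u ≤ (t - 8) * A * (u * (1 + p / t)) + u := by gcongr
      _ = A * u * (t - 8 + (t - 8) * (p / t)) + u := by ring
      _ ≤ A * u * (t - 8 + p) + A * u := by gcongr; nlinarith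
      _ ≤ A * (t + 1) * u := by nlinarith [mul_pos (one_pos.trans_le hA) hu₀]
  calc e' ≤ (1 - 9 / (t + 1)) * (A * C / u) + C / ((t + 1) * v) := by
        rw [Real.rpow_add (by linarith), Real.rpow_one] at hrec
        nlinarith [mul_le_mul_of_nonneg_left he hcoeff]
    _ = C * ((t - 8) * A * v + u) / ((t + 1) * u * v) := by
        field_simp; ring
    _ ≤ C * (A * (t + 1) * u) / ((t + 1) * u * v) := by gcongr
    _ = A * C / v := by field_simp

/-- Induction lemma resolving the SHCGM recursion for the smoothed gap. -/
theorem shcgm_gap_recursion (E : ℕ → ℝ) (C : ℝ) (hC : 0 ≤ C)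
    (hrec : ∀ k : ℕ, 1 ≤ k →
      E (k + 1) ≤ (1 - 9 / ((k : ℝ) + 8)) * E k + C / ((k : ℝ) + 8) ^ ((4 : ℝ) / 3)) :
    ∀ k : ℕ, 1 ≤ k →
      E (k + 1) ≤ (9 : ℝ) ^ ((1 : ℝ) / 3) * C / ((k : ℝ) + 8) ^ ((1 : ℝ) / 3) := by
  have hA : (1 : ℝ) ≤ 9 ^ ((1 : ℝ) / 3) := Real.one_le_rpow (by norm_num) (by norm_num)
  intro k hk
  induction k, hk using Nat.le_induction with
  | base =>
    have h := hrec 1 le_rfl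
    have h9 : C / (9 : ℝ) ^ ((4 : ℝ) / 3) ≤ C :=
      div_le_self hC (Real.one_le_rpow (by norm_num) (by norm_num))
    norm_num at h ⊢
    linarith
  | succ k _ ih =>
    have hshift : ((k + 1 : ℕ) : ℝ) + 8 = (k + 8) + 1 := by push_cast; ring
    have hrec' := hrec (k + 1) (by omega)
    rw [hshift, show (4 : ℝ) / 3 = 1 + 1 / 3 by norm_num] at hrec'
    rw [hshift]
    exact le_div_rpow_succ_of_recursion (le_add_of_nonneg_left k.cast_nonneg)
      (by norm_num) (by norm_num) hA hC ih hrec'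
end

section
/- Let (E_k)_{k≥1} be nonnegative reals satisfying E_{k+1} ≤ (1 - 9δ/(δ(k-1)+9)) E_k + C/(δ(k-1)+9)^{4/3} for all k ≥ 1, where δ ∈ (0,1] and C ≥ 0. Then for all k ≥ 1: E_{k+1} ≤ 9^{1/3} (C/δ + E_1) / (δ(k-1)+9)^{1/3}. -/
/-!
Writing `x_k = δ (k - 1) + 9`, the claimed bound `D / x_k ^ (1/3)` with `D = 9 ^ (1/3) (C / δ + E 1)`
is propagated by the recursion: since `x_{k+1} = x_k + δ` and `(x_{k+1} / x_k) ^ (1/3) ≤ x_{k+1} / x_k`,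
the contraction `1 - 9 δ / x_{k+1}` absorbs both the growth of the bound and the noise term
`C / x_{k+1} ^ (4/3) ≤ δ D / x_{k+1} ^ (4/3)`.
-/

open Real

lemma rpow_recursion_step {x δ a p D : ℝ} (hx : 0 < x) (hδ : 0 ≤ δ) (ha : 2 ≤ a)
    (haδ : a * δ ≤ x + δ) (hp : p ≤ 1) (hD : 0 ≤ D) :
    (1 - a * δ / (x + δ)) * (D / x ^ p) + δ * D / (x + δ) ^ (1 + p) ≤ D / (x + δ) ^ p := by
  set y := x + δ
  have hy : 0 < y := by positivity
  have hcoef : 0 ≤ 1 - a * δ / y := by rwa [sub_nonneg, div_le_one hy]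
  have hratio : (y / x) ^ p ≤ y / x :=
    rpow_le_self_of_one_le ((one_le_div hx).2 (by linarith)) hp
  have hbracket : (1 - a * δ / y) * (y / x) ^ p + δ / y ≤ 1 :=
    calc (1 - a * δ / y) * (y / x) ^ p + δ / y
        ≤ (1 - a * δ / y) * (y / x) + δ / y := by gcongr
      _ ≤ 1 := by
        rw [← sub_nonneg]
        have hkey :
            1 - ((1 - a * δ / y) * (y / x) + δ / y) = δ * ((a - 2) * y + δ) / (x * y) := by
          field_simp
          ring
        rw [hkey]
        positivity
  calc (1 - a * δ / y) * (D / x ^ p) + δ * D / y ^ (1 + p)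
      = D / y ^ p * ((1 - a * δ / y) * (y / x) ^ p + δ / y) := by
        rw [div_rpow hy.le hx.le, rpow_add hy, rpow_one]
        field_simp
    _ ≤ D / y ^ p := mul_le_of_le_one_right (by positivity) hbracket

theorem le_div_rpow_of_recursion {E : ℕ → ℝ} {c δ a p C D : ℝ} (hc : 0 < c) (hδ : 0 ≤ δ)
    (ha : 2 ≤ a) (haδ : a * δ ≤ c + δ) (hp : p ≤ 1) (hD : 0 ≤ D) (hCD : C ≤ δ * D)
    (h0 : E 0 ≤ D / c ^ p)
    (hrec : ∀ k : ℕ, E (k + 1) ≤ (1 - a * δ / (c + δ * (k + 1))) * E k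
      + C / (c + δ * (k + 1)) ^ (1 + p)) :
    ∀ k : ℕ, E k ≤ D / (c + δ * k) ^ p := by
  intro k
  induction k with
  | zero => simpa using h0
  | succ k ih =>
    have hx : 0 < c + δ * k := by positivity
    have hnext : c + δ * ((k + 1 : ℕ) : ℝ) = c + δ * k + δ := by push_cast; ring
    have hcoef : 0 ≤ 1 - a * δ / (c + δ * k + δ) := by
      rw [sub_nonneg, div_le_one (by positivity)]
      nlinarith
    calc E (k + 1)
        ≤ (1 - a * δ / (c + δ * k + δ)) * E k + C / (c + δ * k + δ) ^ (1 + p) := by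
          simpa only [Nat.cast_succ, mul_add, mul_one, ← add_assoc] using hrec k
      _ ≤ (1 - a * δ / (c + δ * k + δ)) * (D / (c + δ * k) ^ p)
            + δ * D / (c + δ * k + δ) ^ (1 + p) := by gcongr
      _ ≤ D / (c + δ * ((k + 1 : ℕ) : ℝ)) ^ p := by
          rw [hnext]
          exact rpow_recursion_step hx hδ ha (by nlinarith) hp hD

/-- Induction lemma for the SHCGM recursion with a multiplicative-error oracle. -/
theorem shcgm_gap_recursion_multiplicative (E : ℕ → ℝ) (C δ : ℝ)
    (hE : ∀ k, 0 ≤ E k) (hC : 0 ≤ C) (hδ0 : 0 < δ) (hδ1 : δ ≤ 1)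
    (hrec : ∀ k : ℕ, 1 ≤ k →
      E (k + 1) ≤ (1 - 9 * δ / (δ * ((k : ℝ) - 1) + 9)) * E k
        + C / (δ * ((k : ℝ) - 1) + 9) ^ ((4 : ℝ) / 3)) :
    ∀ k : ℕ, 1 ≤ k →
      E (k + 1) ≤ (9 : ℝ) ^ ((1 : ℝ) / 3) * (C / δ + E 1)
        / (δ * ((k : ℝ) - 1) + 9) ^ ((1 : ℝ) / 3) := by
  set D := (9 : ℝ) ^ ((1 : ℝ) / 3) * (C / δ + E 1)
  have hB : 0 ≤ C / δ + E 1 := add_nonneg (div_nonneg hC hδ0.le) (hE 1)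
  have hu : (1 : ℝ) ≤ 9 ^ ((1 : ℝ) / 3) := one_le_rpow (by norm_num) (by norm_num)
  have hCD : C ≤ δ * D :=
    calc C ≤ C + δ * E 1 := le_add_of_nonneg_right (mul_nonneg hδ0.le (hE 1))
      _ = δ * (C / δ + E 1) := by field_simp
      _ ≤ δ * D := by gcongr; exact le_mul_of_one_le_left hB hu
  -- the recursion for `E (k + 1)`, started one step early at `x_0 = 9 - δ`
  have h0 : E 1 ≤ D / (9 - δ) ^ ((1 : ℝ) / 3) :=
    calc E 1 ≤ C / δ + E 1 := le_add_of_nonneg_left (div_nonneg hC hδ0.le)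
      _ = D / 9 ^ ((1 : ℝ) / 3) := by simp only [D]; field_simp
      _ ≤ D / (9 - δ) ^ ((1 : ℝ) / 3) := by
          have : 0 < 9 - δ := by linarith
          gcongr
          linarith
  have hindex : ∀ k : ℕ, 9 - δ + δ * (k + 1) = δ * (((k + 1 : ℕ) : ℝ) - 1) + 9 := by
    intro k; push_cast; ring
  have hbound := le_div_rpow_of_recursion (E := fun k => E (k + 1)) (a := 9) (p := 1 / 3)
    (by linarith) hδ0.le (by norm_num) (by linarith) (by norm_num) (by positivity) hCD h0
    fun k => by
      simpa only [hindex, show (1 : ℝ) + 1 / 3 = 4 / 3 by norm_num] using hrec (k + 1) (by omega)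
  intro k hk
  obtain ⟨n, rfl⟩ := Nat.exists_eq_add_of_le' hk
  rw [← hindex]
  simpa only [Nat.cast_succ] using hbound (n + 1)
end

section
/- Define η_k = 9/(δ(k-1)+9) and β_k = β₀/√(δ(k-1)+9) for k ≥ 1, with δ ∈ (0,1] and β₀ > 0. Then for all k ≥ 2: (1 - δη_k)(β_{k-1} - β_k) - δη_k β_k < 0. -/
set_option maxHeartbeats 1000000 in
/-- Coupled parameter inequality for SHCGM with a multiplicative-error oracle. -/
theorem shcgm_parameter_inequality_multiplicative (β₀ δ : ℝ)
    (hβ₀ : 0 < β₀) (hδ0 : 0 < δ) (hδ1 : δ ≤ 1)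
    (η β : ℕ → ℝ)
    (hη : ∀ k : ℕ, 1 ≤ k → η k = 9 / (δ * ((k : ℝ) - 1) + 9))
    (hβ : ∀ k : ℕ, 1 ≤ k → β k = β₀ / Real.sqrt (δ * ((k : ℝ) - 1) + 9)) :
    ∀ k : ℕ, 2 ≤ k → (1 - δ * η k) * (β (k - 1) - β k) - δ * η k * β k < 0 := by
  intro k hk
  have hk1 : 1 ≤ k := le_trans (by norm_num) hk
  have hk1' : 1 ≤ k - 1 := Nat.le_sub_one_of_lt hk
  have hcast : ((k - 1 : ℕ) : ℝ) = (k : ℝ) - 1 := by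
    have : (1 : ℕ) ≤ k := hk1
    push_cast [Nat.cast_sub this]
    ring
  rw [hη k hk1, hβ k hk1, hβ (k - 1) hk1', hcast]
  set a : ℝ := δ * ((k : ℝ) - 1) + 9 with ha
  have hb : δ * ((k : ℝ) - 1 - 1) + 9 = a - δ := by ring
  rw [hb]
  have hkR : (2 : ℝ) ≤ (k : ℝ) := by exact_mod_cast hk
  have ha9 : 9 + δ ≤ a := by nlinarith
  have hbpos : (9 : ℝ) ≤ a - δ := by nlinarith
  have hapos : (0 : ℝ) < a := by nlinarith
  set sa := Real.sqrt a with hsa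
  set sb := Real.sqrt (a - δ) with hsb
  have hsa2 : sa ^ 2 = a := Real.sq_sqrt (by linarith)
  have hsb2 : sb ^ 2 = a - δ := Real.sq_sqrt (by linarith)
  have hsa3 : (3 : ℝ) ≤ sa := by
    rw [show (3:ℝ) = Real.sqrt 9 by rw [show (9:ℝ) = 3^2 by norm_num, Real.sqrt_sq]; norm_num]
    exact Real.sqrt_le_sqrt (by linarith)
  have hsb3 : (3 : ℝ) ≤ sb := by
    rw [show (3:ℝ) = Real.sqrt 9 by rw [show (9:ℝ) = 3^2 by norm_num, Real.sqrt_sq]; norm_num]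
    exact Real.sqrt_le_sqrt (by linarith)
  have hsapos : 0 < sa := by linarith
  have hsbpos : 0 < sb := by linarith
  rw [div_sub_div _ _ (ne_of_gt hsbpos) (ne_of_gt hsapos)]
  clear_value a sa sb
  have h1 : (sa - sb) * (sa + sb) = δ := by nlinarith
  have h2 : (0:ℝ) < sa + sb := by linarith
  have hD : (0:ℝ) < a * (sb * sa) := by positivity
  have hmain : (a - 9*δ) * (sa - sb) < 9*δ*sb := by
    have key2 : ((a - 9*δ) * (sa - sb) - 9*δ*sb) * (sa + sb)
        = δ*(a - 9*δ) - 9*δ*(sb*sa + (a - δ)) := by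
      linear_combination (a - 9*δ) * h1 - 9*δ*hsb2
    have h4 : δ*(a - 9*δ) - 9*δ*(sb*sa + (a - δ)) < 0 := by
      nlinarith [mul_pos hδ0 hapos, mul_pos hδ0 (mul_pos hsbpos hsapos)]
    nlinarith [key2, h4, h2]
  have hnum : (a - 9*δ) * (β₀ * (sa - sb)) < 9*δ*β₀*sb := by
    nlinarith [mul_lt_mul_of_pos_left hmain hβ₀]
  have L : (1 - δ * (9 / a)) * ((β₀ * sa - sb * β₀) / (sb * sa))
      = ((a - 9*δ) * (β₀ * (sa - sb))) / (a * (sb * sa)) := by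
    field_simp
  have R : δ * (9 / a) * (β₀ / sa) = (9*δ*β₀*sb) / (a * (sb * sa)) := by
    field_simp
  have key : (1 - δ * (9 / a)) * ((β₀ * sa - sb * β₀) / (sb * sa)) < δ * (9 / a) * (β₀ / sa) := by
    rw [L, R, div_lt_div_iff₀ hD hD]
    exact mul_lt_mul_of_pos_right hnum hD
  linarith
end

section
/- Suppose for every k ≥ 1: E f(x_{k+1}) - f* + (1/(2β_k)) E[dist(Ax_{k+1}, K)²] ≤ 9^{1/3} C/(k+8)^{1/3} with β_k = β₀/√(k+8), and that E f(x_{k+1}) - f* ≥ -‖y*‖ E dist(Ax_{k+1}, K). Then E dist(Ax_{k+1}, K) ≤ 2β₀‖y*‖/√(k+8) + 2√(2·9^{1/3} C β₀)/(k+8)^{5/12}. -/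
open RealInnerProductSpace

private lemma sqrt_add_le' (x y : ℝ) (hx : 0 ≤ x) (hy : 0 ≤ y) :
    Real.sqrt (x + y) ≤ Real.sqrt x + Real.sqrt y := by
  have h : x + y ≤ (Real.sqrt x + Real.sqrt y) ^ 2 := by
    have hx' := Real.sq_sqrt hx
    have hy' := Real.sq_sqrt hy
    nlinarith [Real.sqrt_nonneg x, Real.sqrt_nonneg y]
  calc Real.sqrt (x + y) ≤ Real.sqrt ((Real.sqrt x + Real.sqrt y) ^ 2) :=
        Real.sqrt_le_sqrt h
    _ = |Real.sqrt x + Real.sqrt y| := Real.sqrt_sq_eq_abs _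
    _ = Real.sqrt x + Real.sqrt y := abs_of_nonneg (by positivity)

/-- Converting the penalized-objective bound into the feasibility-gap bound.
Here `Ef k` models `E f(x_{k+1}) - f*`, `D1 k` models `E dist(Ax_{k+1}, K)`, and
`D2 k` models `E dist(Ax_{k+1}, K)²` (so that Jensen gives `(D1 k)² ≤ D2 k`). -/
theorem feasibility_gap_bound {m : ℕ} (ystar : EuclideanSpace ℝ (Fin m))
    (Ef D1 D2 : ℕ → ℝ) (fstar C β₀ : ℝ) (hβ₀ : 0 < β₀) (hC : 0 ≤ C)
    (hD1 : ∀ k, 0 ≤ D1 k) (hJensen : ∀ k, (D1 k) ^ 2 ≤ D2 k)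
    (hpen : ∀ k : ℕ, 1 ≤ k →
      Ef k - fstar + 1 / (2 * (β₀ / Real.sqrt ((k : ℝ) + 8))) * D2 k
        ≤ (9 : ℝ) ^ ((1 : ℝ) / 3) * C / ((k : ℝ) + 8) ^ ((1 : ℝ) / 3))
    (hlow : ∀ k : ℕ, 1 ≤ k → Ef k - fstar ≥ -‖ystar‖ * D1 k) :
    ∀ k : ℕ, 1 ≤ k →
      D1 k ≤ 2 * β₀ * ‖ystar‖ / Real.sqrt ((k : ℝ) + 8)
        + 2 * Real.sqrt (2 * (9 : ℝ) ^ ((1 : ℝ) / 3) * C * β₀)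
          / ((k : ℝ) + 8) ^ ((5 : ℝ) / 12) := by
  intro k hk
  set s : ℝ := (k : ℝ) + 8 with hsdef
  have hs0 : (0 : ℝ) < s := by
    have : (0:ℝ) ≤ (k:ℝ) := Nat.cast_nonneg k
    simp only [hsdef]; linarith
  have hsq : 0 < Real.sqrt s := Real.sqrt_pos.2 hs0
  set β : ℝ := β₀ / Real.sqrt s with hβdef
  have hβ0 : 0 < β := div_pos hβ₀ hsq
  set R : ℝ := (9 : ℝ) ^ ((1 : ℝ) / 3) * C / s ^ ((1 : ℝ) / 3) with hRdef
  have hR0 : 0 ≤ R :=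
    div_nonneg (mul_nonneg (Real.rpow_nonneg (by norm_num) _) hC)
      (Real.rpow_nonneg hs0.le _)
  set d : ℝ := D1 k with hddef
  have hd0 : 0 ≤ d := hD1 k
  -- key scalar inequality
  have hkey : 1 / (2 * β) * d ^ 2 ≤ ‖ystar‖ * d + R := by
    have h1 := hpen k hk
    have h2 := hlow k hk
    have h3 : 1 / (2 * β) * d ^ 2 ≤ 1 / (2 * β) * D2 k :=
      mul_le_mul_of_nonneg_left (hJensen k) (by positivity)
    linarith
  have h2β : (0 : ℝ) < 2 * β := by linarith
  have hkey' : d ^ 2 ≤ 2 * β * (‖ystar‖ * d + R) := by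
    rw [div_mul_eq_mul_div, one_mul, div_le_iff₀ h2β] at hkey
    linarith [hkey]
  have hsq2 : (d - β * ‖ystar‖) ^ 2 ≤ β ^ 2 * ‖ystar‖ ^ 2 + 2 * β * R := by
    nlinarith [hkey']
  have hstep : d - β * ‖ystar‖ ≤ β * ‖ystar‖ + Real.sqrt (2 * β * R) := by
    have h1 : d - β * ‖ystar‖ ≤ Real.sqrt (β ^ 2 * ‖ystar‖ ^ 2 + 2 * β * R) := by
      calc d - β * ‖ystar‖ ≤ |d - β * ‖ystar‖| := le_abs_self _
        _ = Real.sqrt ((d - β * ‖ystar‖) ^ 2) := (Real.sqrt_sq_eq_abs _).symm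
        _ ≤ _ := Real.sqrt_le_sqrt hsq2
    have h2 : Real.sqrt (β ^ 2 * ‖ystar‖ ^ 2 + 2 * β * R)
        ≤ β * ‖ystar‖ + Real.sqrt (2 * β * R) := by
      have := sqrt_add_le' (β ^ 2 * ‖ystar‖ ^ 2) (2 * β * R) (by positivity) (by positivity)
      have heq : Real.sqrt (β ^ 2 * ‖ystar‖ ^ 2) = β * ‖ystar‖ := by
        rw [show β ^ 2 * ‖ystar‖ ^ 2 = (β * ‖ystar‖) ^ 2 by ring, Real.sqrt_sq (by positivity)]
      linarith [this, heq.le, heq.ge]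
    linarith
  have hd_le : d ≤ 2 * β * ‖ystar‖ + Real.sqrt (2 * β * R) := by linarith
  -- compute the sqrt term
  have hpow : Real.sqrt s * s ^ ((1 : ℝ) / 3) = s ^ ((5 : ℝ) / 6) := by
    rw [Real.sqrt_eq_rpow, ← Real.rpow_add hs0]
    norm_num
  have h2βR : 2 * β * R = (2 * (9 : ℝ) ^ ((1 : ℝ) / 3) * C * β₀) / s ^ ((5 : ℝ) / 6) := by
    rw [hβdef, hRdef, ← hpow]
    field_simp
  have hroot : Real.sqrt (s ^ ((5 : ℝ) / 6)) = s ^ ((5 : ℝ) / 12) := by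
    rw [Real.sqrt_eq_rpow, ← Real.rpow_mul hs0.le]
    norm_num
  have hsqrt_eq : Real.sqrt (2 * β * R)
      = Real.sqrt (2 * (9 : ℝ) ^ ((1 : ℝ) / 3) * C * β₀) / s ^ ((5 : ℝ) / 12) := by
    rw [h2βR, Real.sqrt_div (by positivity), hroot]
  have hterm : Real.sqrt (2 * β * R)
      ≤ 2 * Real.sqrt (2 * (9 : ℝ) ^ ((1 : ℝ) / 3) * C * β₀) / s ^ ((5 : ℝ) / 12) := by
    rw [hsqrt_eq]
    have hp : (0:ℝ) < s ^ ((5 : ℝ) / 12) := Real.rpow_pos_of_pos hs0 _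
    have hn : (0:ℝ) ≤ Real.sqrt (2 * (9 : ℝ) ^ ((1 : ℝ) / 3) * C * β₀) := Real.sqrt_nonneg _
    rw [div_le_div_iff₀ hp hp]
    nlinarith
  have hβeq : 2 * β * ‖ystar‖ = 2 * β₀ * ‖ystar‖ / Real.sqrt s := by
    rw [hβdef]; ring
  linarith
end

section
/- Let X be convex with diameter D, δ ∈ (0,1], and v, x, s, s̃, x* ∈ R^n with x, s, s̃, x* ∈ X. Suppose s̃ satisfies the multiplicative inexact-oracle condition ⟨v, s̃ - x⟩ ≤ δ⟨v, s - x⟩ where s minimizes ⟨v, ·⟩ over X. Then for any vector w: ⟨w, s̃ - x⟩ ≤ ‖w - v‖·D + δ⟨v, x* - x⟩. -/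
open RealInnerProductSpace

/-- Key inequality for the multiplicative-error inexact linear minimization oracle. -/
theorem multiplicative_oracle_bound {n : ℕ}
    (X : Set (EuclideanSpace ℝ (Fin n))) (hXconv : Convex ℝ X) (D : ℝ)
    (hD : ∀ u ∈ X, ∀ v ∈ X, dist u v ≤ D)
    (δ : ℝ) (hδ0 : 0 < δ) (hδ1 : δ ≤ 1)
    (v x s stilde xstar : EuclideanSpace ℝ (Fin n))
    (hx : x ∈ X) (hs : s ∈ X) (hstilde : stilde ∈ X) (hxstar : xstar ∈ X)
    (hmin : ∀ z ∈ X, ⟪v, s⟫ ≤ ⟪v, z⟫)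
    (hinexact : ⟪v, stilde - x⟫ ≤ δ * ⟪v, s - x⟫) :
    ∀ w : EuclideanSpace ℝ (Fin n),
      ⟪w, stilde - x⟫ ≤ ‖w - v‖ * D + δ * ⟪v, xstar - x⟫ := by
  intro w
  have h1 : ⟪w - v, stilde - x⟫ ≤ ‖w - v‖ * D := by
    calc ⟪w - v, stilde - x⟫ ≤ ‖w - v‖ * ‖stilde - x‖ := real_inner_le_norm _ _
      _ ≤ ‖w - v‖ * D := by
          apply mul_le_mul_of_nonneg_left _ (norm_nonneg _)
          simpa [dist_eq_norm] using hD stilde hstilde x hx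
  have h2 : ⟪v, s - x⟫ ≤ ⟪v, xstar - x⟫ := by
    simp only [inner_sub_right]
    linarith [hmin xstar hxstar]
  have h3 : ⟪v, stilde - x⟫ ≤ δ * ⟪v, xstar - x⟫ :=
    hinexact.trans (by nlinarith)
  have h4 : ⟪w, stilde - x⟫ = ⟪w - v, stilde - x⟫ + ⟪v, stilde - x⟫ := by
    rw [inner_sub_left]; ring
  linarith
end
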